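/- arXiv:1303.6642 — 2 statements merged into one kernel-verified Lean document; each statement's English description precedes it below -/
import Mathlib

section
/- Let G be a finite simple graph on vertices V = {x_1, ..., x_n} with cover ideal J = J(G) ⊆ S = K[x_1, ..., x_n], and let m = x_1 x_2 ⋯ x_n. Then G is bipartite (i.e., 2-colorable) if and only if m ∈ J^2. -/
open MvPolynomial

/-- A finite simple graph on vertex set `Fin n`, presented as a hypergraph all of whose
edges have cardinality exactly two. -/
structure GraphOn (n : ℕ) where
  edges : Finset (Finset (Fin n))
  card_eq : ∀ e ∈ edges, e.card = 2

/-- `w` is a vertex cover of `G`: it meets every edge. -/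
def IsCover {n : ℕ} (G : GraphOn n) (w : Finset (Fin n)) : Prop :=
  ∀ e ∈ G.edges, (w ∩ e).Nonempty

/-- The cover ideal of `G`, generated by the squarefree monomials corresponding to
vertex covers. -/
noncomputable def coverIdeal {n : ℕ} (K : Type*) [Field K] (G : GraphOn n) :
    Ideal (MvPolynomial (Fin n) K) :=
  Ideal.span {m | ∃ w : Finset (Fin n), IsCover G w ∧ m = ∏ i ∈ w, X i}

/-- `G` is bipartite: it is `2`-colorable. -/
def IsBipartite {n : ℕ} (G : GraphOn n) : Prop :=
  ∃ c : Fin n → Fin 2, ∀ e ∈ G.edges, ∃ u ∈ e, ∃ v ∈ e, c u ≠ c v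

/-! The two colour classes of a 2-colouring are disjoint vertex covers, and conversely two
disjoint covers `w, w'` give the colouring "in `w` or not". On the algebraic side, `J(G)^2` is
the monomial ideal spanned by the products `x^w x^w'` of cover monomials, and a monomial lies
in a monomial ideal iff one of its generators divides it; `x^w x^w'` divides `x_1 ⋯ x_n` exactly
when `w` and `w'` are disjoint. -/

theorem Finset.sum_single_one_apply {σ : Type*} [DecidableEq σ] (s : Finset σ) (j : σ) :
    (∑ i ∈ s, Finsupp.single i 1 : σ →₀ ℕ) j = if j ∈ s then 1 else 0 := by
  simp [Finset.sum_apply', Finsupp.single_apply]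

theorem Finset.sum_single_one_add_le_iff {σ : Type*} [DecidableEq σ] {s t u : Finset σ} :
    ∑ i ∈ s, Finsupp.single i 1 + ∑ i ∈ t, Finsupp.single i 1 ≤ ∑ i ∈ u, Finsupp.single i 1 ↔
      Disjoint s t ∧ s ∪ t ⊆ u := by
  simp only [Finsupp.le_def, Finsupp.add_apply, Finset.sum_single_one_apply,
    Finset.disjoint_left, Finset.subset_iff, Finset.mem_union, ← forall_and]
  refine forall_congr' fun j => ?_
  split_ifs <;> simp_all

namespace MvPolynomial

variable {σ R : Type*} [CommSemiring R]

theorem prod_X_eq_monomial_sum_single (s : Finset σ) :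
    ∏ i ∈ s, (X i : MvPolynomial σ R) = monomial (∑ i ∈ s, Finsupp.single i 1) 1 := by
  rw [monomial_sum_one]
  rfl

theorem monomial_one_mem_span_monomial_image_iff [Nontrivial R] {d : σ →₀ ℕ}
    {D : Set (σ →₀ ℕ)} :
    monomial d (1 : R) ∈ Ideal.span ((fun s => monomial s (1 : R)) '' D) ↔ ∃ s ∈ D, s ≤ d := by
  classical
  rw [mem_ideal_span_monomial_image, support_monomial, if_neg one_ne_zero]
  simp

theorem span_prod_X_image_sq (𝒲 : Set (Finset σ)) :
    Ideal.span ((fun w => ∏ i ∈ w, (X i : MvPolynomial σ R)) '' 𝒲) ^ 2 =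
      Ideal.span ((fun d => monomial d 1) ''
        Set.image2 (fun w w' => ∑ i ∈ w, Finsupp.single i 1 + ∑ i ∈ w', Finsupp.single i 1)
          𝒲 𝒲) := by
  rw [sq, Ideal.span_mul_span', ← Set.image2_mul, Set.image2_image_left, Set.image2_image_right,
    Set.image_image2]
  simp_rw [prod_X_eq_monomial_sum_single, monomial_mul, one_mul]

theorem prod_X_mem_span_prod_X_image_sq_iff [Nontrivial R] [DecidableEq σ] (𝒲 : Set (Finset σ))
    (u : Finset σ) :
    ∏ i ∈ u, (X i : MvPolynomial σ R) ∈ Ideal.span ((fun w => ∏ i ∈ w, X i) '' 𝒲) ^ 2 ↔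
      ∃ w ∈ 𝒲, ∃ w' ∈ 𝒲, Disjoint w w' ∧ w ∪ w' ⊆ u := by
  rw [span_prod_X_image_sq, prod_X_eq_monomial_sum_single, monomial_one_mem_span_monomial_image_iff]
  simp only [Set.exists_mem_image2, Finset.sum_single_one_add_le_iff]

end MvPolynomial

theorem coverIdeal_eq_span_image {n : ℕ} (K : Type*) [Field K] (G : GraphOn n) :
    coverIdeal K G = Ideal.span ((fun w => ∏ i ∈ w, X i) '' {w | IsCover G w}) := by
  simp only [coverIdeal, Set.image, Set.mem_ofPred_eq, eq_comm]

theorem isBipartite_iff_exists_disjoint_isCover {n : ℕ} (G : GraphOn n) :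
    IsBipartite G ↔ ∃ w, IsCover G w ∧ ∃ w', IsCover G w' ∧ Disjoint w w' := by
  constructor
  · rintro ⟨c, hc⟩
    have hcover : ∀ k, IsCover G {i | c i = k} := by
      intro k e he
      obtain ⟨u, hu, v, hv, huv⟩ := hc e he
      obtain h | h : c u = k ∨ c v = k := by omega
      · exact ⟨u, by simp [h, hu]⟩
      · exact ⟨v, by simp [h, hv]⟩
    refine ⟨_, hcover 0, _, hcover 1, Finset.disjoint_filter.2 fun i _ h => ?_⟩
    simp [h]
  · rintro ⟨w, hw, w', hw', hdisj⟩
    refine ⟨fun i => if i ∈ w then 0 else 1, fun e he => ?_⟩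
    obtain ⟨u, hu⟩ := hw e he
    obtain ⟨v, hv⟩ := hw' e he
    rw [Finset.mem_inter] at hu hv
    refine ⟨u, hu.2, v, hv.2, ?_⟩
    simp [hu.1, Finset.disjoint_right.1 hdisj hv.1]

/-- A finite simple graph `G` is bipartite if and only if
`m = x_1 ⋯ x_n` lies in `J(G)^2`. -/
theorem bipartite_iff_mem_coverIdeal_sq {n : ℕ} (K : Type*) [Field K] (G : GraphOn n) :
    IsBipartite G ↔
      (∏ j : Fin n, (X j : MvPolynomial (Fin n) K)) ∈ coverIdeal K G ^ 2 := by
  rw [coverIdeal_eq_span_image, prod_X_mem_span_prod_X_image_sq_iff,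
    isBipartite_iff_exists_disjoint_isCover]
  simp only [Set.mem_ofPred_eq, Finset.subset_univ, and_true]
end

section
/- Let G be a finite simple graph with edge ideal I = I(G) ⊆ S = K[x_1, ..., x_n]. A squarefree monomial m is a minimal monomial generator of the second secant power I^{2} if and only if the induced subgraph G_m of G on the vertices dividing m is an induced odd cycle. -/
open MvPolynomial

/-- The edge ideal of `G`. -/
noncomputable def edgeIdeal {n : ℕ} (K : Type*) [Field K] (G : GraphOn n) :
    Ideal (MvPolynomial (Fin n) K) :=
  Ideal.span {m | ∃ e ∈ G.edges, m = ∏ i ∈ e, X i}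

/-- The induced subgraph of `G` on `W` is an odd cycle: `W` has odd cardinality at least
three, and the vertices of `W` can be arranged cyclically so that the edges of `G`
contained in `W` are exactly the pairs of consecutive vertices. -/
def IsInducedOddCycle {n : ℕ} (G : GraphOn n) (W : Finset (Fin n)) : Prop :=
  3 ≤ W.card ∧ Odd W.card ∧
    ∃ f : ZMod W.card → Fin n, Function.Injective f ∧ (∀ i, f i ∈ W) ∧
      (∀ w ∈ W, ∃ i, f i = w) ∧
      (∀ i, ({f i, f (i + 1)} : Finset (Fin n)) ∈ G.edges) ∧
      (∀ e ∈ G.edges, e ⊆ W → ∃ i, e = ({f i, f (i + 1)} : Finset (Fin n)))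

/-- The `k`-th secant power `I^{k}` of an ideal `I ⊆ S = K[x_1, …, x_n]`:
working in `T = K[V, Y_1, …, Y_k]` (with `y_{i,j}` encoded as `X (Sum.inr (i, j))` and
`x_j` as `X (Sum.inl j)`), it is the contraction to `S` of
`I(Y_1) + ⋯ + I(Y_k) + ({x_j − (y_{1,j} + ⋯ + y_{k,j})})`. -/
noncomputable def secantPower {n : ℕ} {K : Type*} [Field K]
    (I : Ideal (MvPolynomial (Fin n) K)) (k : ℕ) : Ideal (MvPolynomial (Fin n) K) :=
  Ideal.comap (rename (Sum.inl : Fin n → Fin n ⊕ (Fin k × Fin n)))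
    ((⨆ i : Fin k, Ideal.map (rename fun j : Fin n => (Sum.inr (i, j) : Fin n ⊕ (Fin k × Fin n))) I)
      ⊔ Ideal.span {p | ∃ j : Fin n,
          p = X (Sum.inl j) - ∑ i : Fin k, X (Sum.inr (i, j) : Fin n ⊕ (Fin k × Fin n))})

/-!
Modulo the ideal whose contraction is `I^{k}` we have `x_j ≡ y_{1,j} + ⋯ + y_{k,j}`, so `x_W`
expands into one monomial `∏_{j ∈ W} y_{c(j),j}` for each map `c : W → Fin k`, and that monomial
vanishes as soon as `c` is constant on an edge. Conversely a proper colouring `c` yields the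
specialisation `y_{i,j} ↦ [c(j) = i] x_j`, which kills that ideal but not `x_W`. Hence
`x_W ∈ I^{k}` exactly when `G_W` is not `k`-colourable, and the minimal generators of `I^{2}` are
the minimal non-bipartite vertex sets. A shortest odd closed walk is an induced cycle, because a
chord or a repeated vertex would split it into two shorter closed walks, one of them odd; in a
minimal non-bipartite set it must therefore run through every vertex exactly once.
-/

theorem ZMod.val_add_one_of_lt {s : ℕ} {x : ZMod s} (h : x.val + 1 < s) :
    (x + 1).val = x.val + 1 := by
  have h1 : (1 : ZMod s).val = 1 := ZMod.val_one'' (by omega)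
  rw [ZMod.val_add_of_lt (by rwa [h1]), h1]

theorem ZMod.add_one_eq_zero_of_val_add_one_eq {s : ℕ} {x : ZMod s} (h : x.val + 1 = s) :
    x + 1 = 0 := by
  have : NeZero s := ⟨by omega⟩
  rw [← ZMod.natCast_zmod_val x, ← Nat.cast_add_one, h, ZMod.natCast_self]

theorem ZMod.val_add_one_of_ne_zero {s : ℕ} [NeZero s] {x : ZMod s} (h : x + 1 ≠ 0) :
    (x + 1).val = x.val + 1 :=
  ZMod.val_add_one_of_lt ((Nat.succ_le_of_lt x.val_lt).lt_of_ne fun hs =>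
    h (ZMod.add_one_eq_zero_of_val_add_one_eq hs))

theorem Finset.pair_eq_pair_iff {α : Type*} [DecidableEq α] {x y z w : α} :
    ({x, y} : Finset α) = {z, w} ↔ x = z ∧ y = w ∨ x = w ∧ y = z := by
  rw [← Finset.coe_inj, Finset.coe_pair, Finset.coe_pair, Set.pair_eq_pair_iff]

namespace GraphOn

variable {n : ℕ}

def toSimpleGraph (G : GraphOn n) : SimpleGraph (Fin n) where
  Adj u v := {u, v} ∈ G.edges
  symm := ⟨fun u v h => by rwa [Finset.pair_comm]⟩
  loopless := ⟨fun u h => by simpa using G.card_eq _ h⟩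

abbrev induce (G : GraphOn n) (W : Finset (Fin n)) : SimpleGraph W :=
  G.toSimpleGraph.induce (W : Set (Fin n))

end GraphOn

section SecantPower

variable {n k : ℕ} {K : Type*} [Field K] {I : Ideal (MvPolynomial (Fin n) K)}

noncomputable def secantIdeal (I : Ideal (MvPolynomial (Fin n) K)) (k : ℕ) :
    Ideal (MvPolynomial (Fin n ⊕ (Fin k × Fin n)) K) :=
  (⨆ i : Fin k, Ideal.map (rename fun j : Fin n => (Sum.inr (i, j) : Fin n ⊕ (Fin k × Fin n))) I)
    ⊔ Ideal.span {p | ∃ j : Fin n,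
        p = X (Sum.inl j) - ∑ i : Fin k, X (Sum.inr (i, j) : Fin n ⊕ (Fin k × Fin n))}

theorem mem_secantPower_iff {p : MvPolynomial (Fin n) K} :
    p ∈ secantPower I k ↔ rename Sum.inl p ∈ secantIdeal I k :=
  Iff.rfl

theorem X_inl_sub_sum_mem_secantIdeal (j : Fin n) :
    X (Sum.inl j) - ∑ i : Fin k, X (Sum.inr (i, j)) ∈ secantIdeal I k :=
  Ideal.mem_sup_right (Ideal.subset_span ⟨j, rfl⟩)

theorem rename_inr_mem_secantIdeal (i : Fin k) {p : MvPolynomial (Fin n) K} (hp : p ∈ I) :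
    rename (fun j => (Sum.inr (i, j) : Fin n ⊕ (Fin k × Fin n))) p ∈ secantIdeal I k :=
  Ideal.mem_sup_left (Ideal.mem_iSup_of_mem i (Ideal.mem_map_of_mem _ hp))

theorem secantIdeal_le_ker {R : Type*} [CommRing R] [Algebra K R]
    (φ : MvPolynomial (Fin n ⊕ (Fin k × Fin n)) K →ₐ[K] R)
    (hI : ∀ i : Fin k, I ≤ (RingHom.ker φ).comap (rename fun j => Sum.inr (i, j)))
    (hX : ∀ j, φ (X (Sum.inl j)) = ∑ i, φ (X (Sum.inr (i, j)))) :
    secantIdeal I k ≤ RingHom.ker φ := by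
  refine sup_le (iSup_le fun i => Ideal.map_le_iff_le_comap.mpr (hI i)) ?_
  rw [Ideal.span_le]
  rintro _ ⟨j, rfl⟩
  simp [hX j]

variable {G : GraphOn n} {W : Finset (Fin n)}

theorem prod_X_mem_edgeIdeal {e : Finset (Fin n)} (he : e ∈ G.edges) :
    ∏ j ∈ e, (X j : MvPolynomial (Fin n) K) ∈ edgeIdeal K G :=
  Ideal.subset_span ⟨e, he, rfl⟩

theorem prod_X_mem_secantPower_of_not_colorable (hc : ¬ (G.induce W).Colorable k) :
    ∏ i ∈ W, (X i : MvPolynomial (Fin n) K) ∈ secantPower (edgeIdeal K G) k := by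
  rw [mem_secantPower_iff, ← Ideal.Quotient.eq_zero_iff_mem]
  set q := Ideal.Quotient.mk (secantIdeal (edgeIdeal K G) k)
  have hx : ∀ j, q (rename Sum.inl (X j)) = ∑ i, q (X (Sum.inr (i, j))) := by
    intro j
    rw [rename_X, ← map_sum, Ideal.Quotient.mk_eq_mk_iff_sub_mem]
    exact X_inl_sub_sum_mem_secantIdeal j
  have hy : ∀ i {u v}, G.toSimpleGraph.Adj u v →
      q (X (Sum.inr (i, u))) * q (X (Sum.inr (i, v))) = 0 := by
    intro i u v huv
    have := rename_inr_mem_secantIdeal i (prod_X_mem_edgeIdeal (K := K) huv)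
    rwa [map_prod, Finset.prod_pair huv.ne, rename_X, rename_X, ← Ideal.Quotient.eq_zero_iff_mem,
      map_mul] at this
  rw [map_prod, map_prod, ← Finset.prod_coe_sort]
  simp_rw [hx]
  rw [Fintype.prod_sum]
  refine Finset.sum_eq_zero fun c _ => ?_
  obtain ⟨u, v, huv, hcuv⟩ : ∃ u v, (G.induce W).Adj u v ∧ c u = c v := by
    by_contra! h
    exact hc ⟨SimpleGraph.Coloring.mk c fun huv => h _ _ huv⟩
  have hdvd := Finset.prod_dvd_prod_of_subset {u, v} Finset.univ
    (fun j : W => q (X (Sum.inr (c j, j.1)))) (Finset.subset_univ _)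
  rwa [Finset.prod_pair huv.ne, hcuv, hy (c v) (u := u.1) (v := v.1) huv, zero_dvd_iff] at hdvd

theorem prod_X_notMem_secantPower_of_colorable (hc : (G.induce W).Colorable k) :
    ∏ i ∈ W, (X i : MvPolynomial (Fin n) K) ∉ secantPower (edgeIdeal K G) k := by
  obtain ⟨c⟩ := hc
  let σ : Fin n ⊕ (Fin k × Fin n) → MvPolynomial (Fin n) K :=
    Sum.elim (fun j => if j ∈ W then X j else 0)
      (fun ij => if h : ij.2 ∈ W then if c ⟨ij.2, h⟩ = ij.1 then X ij.2 else 0 else 0)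
  have hker : secantIdeal (edgeIdeal K G) k ≤ RingHom.ker (aeval σ) := by
    refine secantIdeal_le_ker _ (fun i => ?_) (fun j => ?_)
    · rw [edgeIdeal, Ideal.span_le]
      rintro _ ⟨e, he, rfl⟩
      obtain ⟨u, v, huv, rfl⟩ := Finset.card_eq_two.mp (G.card_eq e he)
      simp only [SetLike.mem_coe, Ideal.mem_comap, RingHom.mem_ker, map_mul, rename_X,
        aeval_X, Finset.prod_pair huv]
      by_cases hu : u ∈ W
      · by_cases hv : v ∈ W
        · have := c.valid (show (G.induce W).Adj ⟨u, hu⟩ ⟨v, hv⟩ from he)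
          by_cases hi : c ⟨u, hu⟩ = i
          · subst hi
            simp [σ, hu, hv, Ne.symm this]
          · simp [σ, hu, hi]
        · simp [σ, hv]
      · simp [σ, hu]
    · by_cases hj : j ∈ W
      · simp only [σ, aeval_X, Sum.elim_inl, Sum.elim_inr, if_pos hj, dif_pos hj]
        rw [Finset.sum_ite_eq _ (c ⟨j, hj⟩), if_pos (Finset.mem_univ _)]
      · simp [σ, hj]
  intro hmem
  obtain ⟨j, hj, h0⟩ := by
    simpa only [RingHom.mem_ker, map_prod, rename_X, aeval_X, Finset.prod_eq_zero_iff]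
      using hker hmem
  simp [σ, hj, X_ne_zero] at h0

theorem prod_X_mem_secantPower_iff :
    ∏ i ∈ W, (X i : MvPolynomial (Fin n) K) ∈ secantPower (edgeIdeal K G) k ↔
      ¬ (G.induce W).Colorable k :=
  ⟨fun hmem hc => prod_X_notMem_secantPower_of_colorable hc hmem,
    prod_X_mem_secantPower_of_not_colorable⟩

end SecantPower

namespace SimpleGraph

variable {V : Type*} {G : SimpleGraph V} {s : ℕ} {f : ZMod s → V}

def IsClosedWalk (G : SimpleGraph V) (f : ZMod s → V) : Prop :=
  ∀ i, G.Adj (f i) (f (i + 1))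

theorem IsClosedWalk.ne_one (hf : G.IsClosedWalk f) : s ≠ 1 := by
  rintro rfl
  exact (hf 0).ne (congrArg f (Subsingleton.elim _ _))

theorem IsClosedWalk.not_colorable_two (hf : G.IsClosedWalk f) (hs : Odd s) :
    ¬ G.Colorable 2 := by
  rintro ⟨c : G.Coloring (ZMod 2)⟩
  have hstep : ∀ x y : ZMod 2, x ≠ y → y = x + 1 := by decide
  have hcol : ∀ m : ℕ, c (f m) = c (f 0) + m := by
    intro m
    induction m with
    | zero => simp
    | succ m ih =>
      rw [Nat.cast_succ, Nat.cast_succ, ← add_assoc, ← ih]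
      exact hstep _ _ (c.valid (hf m))
  have := hcol s
  rw [ZMod.natCast_self, left_eq_add, ZMod.natCast_eq_zero_iff_even] at this
  exact Nat.not_even_iff_odd.mpr hs this

theorem exists_odd_closedWalk_of_not_colorable_two (h : ¬ G.Colorable 2) :
    ∃ s, Odd s ∧ ∃ f : ZMod s → V, G.IsClosedWalk f := by
  obtain ⟨u, w, hw⟩ : ∃ u, ∃ w : G.Walk u u, Odd w.length := by
    simpa [two_colorable_iff_forall_loop_even] using h
  have : NeZero w.length := ⟨hw.pos.ne'⟩
  refine ⟨w.length, hw, fun i => w.getVert i.val, fun i => ?_⟩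
  have hi := w.adj_getVert_succ i.val_lt
  rcases (show i.val + 1 ≤ w.length from i.val_lt).lt_or_eq with hlt | heq
  · rwa [← ZMod.val_add_one_of_lt hlt] at hi
  · simpa only [ZMod.add_one_eq_zero_of_val_add_one_eq heq, ZMod.val_zero, Walk.getVert_zero,
      heq, Walk.getVert_length] using hi

theorem IsClosedWalk.shortcut (hf : G.IsClosedWalk f) {a : ZMod s} {d : ℕ}
    (had : G.Adj (f (a + d)) (f a)) : G.IsClosedWalk fun j : ZMod (d + 1) => f (a + j.val) := by
  intro j
  rcases (show j.val + 1 ≤ d + 1 from j.val_lt).lt_or_eq with hlt | heq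
  · simpa only [ZMod.val_add_one_of_lt hlt, Nat.cast_succ, ← add_assoc] using hf (a + j.val)
  · simpa only [ZMod.add_one_eq_zero_of_val_add_one_eq heq, Nat.succ_inj.mp heq, ZMod.val_zero,
      Nat.cast_zero, add_zero] using had

def IsShortestOddClosedWalk (G : SimpleGraph V) (f : ZMod s → V) : Prop :=
  Odd s ∧ G.IsClosedWalk f ∧ ∀ t < s, Odd t → ∀ g : ZMod t → V, ¬ G.IsClosedWalk g

theorem exists_isShortestOddClosedWalk_of_not_colorable_two (h : ¬ G.Colorable 2) :
    ∃ s, ∃ f : ZMod s → V, G.IsShortestOddClosedWalk f := by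
  classical
  have hex := exists_odd_closedWalk_of_not_colorable_two h
  obtain ⟨hodd, f, hf⟩ := Nat.find_spec hex
  exact ⟨_, f, hodd, hf, fun t ht hodd' g hg => Nat.find_min hex ht ⟨hodd', g, hg⟩⟩

theorem IsShortestOddClosedWalk.adj_iff (hf : G.IsShortestOddClosedWalk f) {a b : ZMod s} :
    G.Adj (f a) (f b) ↔ b = a + 1 ∨ a = b + 1 := by
  obtain ⟨hs, hwalk, hmin⟩ := hf
  have : NeZero s := ⟨hs.pos.ne'⟩
  refine ⟨fun hab => ?_, by rintro (rfl | rfl); exacts [hwalk a, (hwalk b).symm]⟩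
  set d := (b - a).val
  set e := (a - b).val
  have hb : b = a + d := by simp [d]
  have ha : a = b + e := by simp [e]
  have hne : b - a ≠ 0 := sub_ne_zero.mpr fun h => hab.ne (congrArg f h.symm)
  have hd : d ≠ 0 := (ZMod.val_ne_zero _).mpr hne
  have hds : d < s := ZMod.val_lt _
  have hde : d + e = s := by
    simp only [d, e]
    rw [show a - b = -(b - a) by ring, ZMod.neg_val, if_neg hne]
    omega
  -- the edge `f a f b` closes both arcs of `f` into closed walks, of lengths `d + 1` and `e + 1`
  have w1 := hwalk.shortcut (a := a) (d := d) (hb ▸ hab.symm)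
  have w2 := hwalk.shortcut (a := b) (d := e) (ha ▸ hab)
  rcases Nat.even_or_odd d with hd' | hd'
  · have : s ≤ d + 1 := not_lt.mp fun hlt => hmin _ hlt hd'.add_one _ w1
    right
    rw [ha, show e = 1 by omega, Nat.cast_one]
  · have he : Even e := (Nat.odd_add.mp (hde ▸ hs)).mp hd'
    have : s ≤ e + 1 := not_lt.mp fun hlt => hmin _ hlt he.add_one _ w2
    left
    rw [hb, show d = 1 by omega, Nat.cast_one]

theorem IsShortestOddClosedWalk.injective (hf : G.IsShortestOddClosedWalk f) :
    Function.Injective f := by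
  -- `f a = f b` is adjacent to `f (b + 1)`, so `adj_iff` forces `a = b + 2`
  have hstep : ∀ {a b}, f a = f b → a ≠ b → a = b + 2 := by
    intro a b hab hne
    rcases hf.adj_iff.mp (hab ▸ hf.2.1 b) with h | h
    · exact absurd (add_right_cancel h).symm hne
    · rw [h, add_assoc, one_add_one_eq_two]
  intro a b hab
  by_contra hne
  have h4 : ((4 : ℕ) : ZMod s) = 0 := by
    have := hstep hab hne
    rw [hstep hab.symm (Ne.symm hne)] at this
    push_cast
    linear_combination -this
  have hs1 : s = 1 := (hf.1.coprime_two_right.pow_right 2).eq_one_of_dvd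
    ((ZMod.natCast_eq_zero_iff 4 s).mp h4)
  exact hf.2.1.ne_one hs1

end SimpleGraph

section InducedOddCycle

variable {n : ℕ} {G : GraphOn n} {W : Finset (Fin n)}

theorem isInducedOddCycle_image {s : ℕ} [NeZero s] (hs3 : 3 ≤ s) (hs : Odd s)
    {f : ZMod s → Fin n} (hf : Function.Injective f)
    (hadj : ∀ a b, G.toSimpleGraph.Adj (f a) (f b) ↔ b = a + 1 ∨ a = b + 1) :
    IsInducedOddCycle G (Finset.univ.image f) := by
  have hcard : (Finset.univ.image f).card = s := by
    rw [Finset.card_image_of_injective _ hf, Finset.card_univ, ZMod.card]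
  rw [IsInducedOddCycle, hcard]
  refine ⟨hs3, hs, f, hf, fun i => Finset.mem_image_of_mem f (Finset.mem_univ i), ?_,
    fun i => (hadj i (i + 1)).mpr (Or.inl rfl), ?_⟩
  · simp
  · intro e he heU
    obtain ⟨x, y, -, rfl⟩ := Finset.card_eq_two.mp (G.card_eq e he)
    obtain ⟨a, -, rfl⟩ := Finset.mem_image.mp (heU (Finset.mem_insert_self x {y}))
    obtain ⟨b, -, rfl⟩ := Finset.mem_image.mp
      (heU (Finset.mem_insert_of_mem (Finset.mem_singleton_self y)))
    rcases (hadj a b).mp he with rfl | rfl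
    · exact ⟨a, rfl⟩
    · exact ⟨b, Finset.pair_comm _ _⟩

theorem IsInducedOddCycle.not_colorable_two (h : IsInducedOddCycle G W) :
    ¬ (G.induce W).Colorable 2 := by
  obtain ⟨-, hodd, f, -, hmem, -, hedge, -⟩ := h
  exact SimpleGraph.IsClosedWalk.not_colorable_two (f := fun i => ⟨f i, hmem i⟩) hedge hodd

theorem IsInducedOddCycle.colorable_two_of_ssubset (h : IsInducedOddCycle G W)
    {W' : Finset (Fin n)} (hW' : W' ⊂ W) : (G.induce W').Colorable 2 := by
  obtain ⟨hs3, -, f, hinj, -, hsurj, -, hind⟩ := h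
  have : NeZero W.card := ⟨by omega⟩
  obtain ⟨w, hwW, hwW'⟩ := Finset.exists_of_ssubset hW'
  obtain ⟨i₀, rfl⟩ := hsurj w hwW
  -- the parity of the distance travelled along the cycle from the deleted vertex `f i₀`
  let c : Fin n → ZMod 2 := fun x => ((Function.invFun f x - i₀).val : ZMod 2)
  have hc : ∀ i, f (i + 1) ∈ W' → c (f i) ≠ c (f (i + 1)) := by
    intro i hi
    have hne : i - i₀ + 1 ≠ 0 := by
      rw [sub_add_eq_add_sub]
      exact sub_ne_zero.mpr fun h0 => hwW' (h0 ▸ hi)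
    simp only [c, Function.leftInverse_invFun hinj _, show i + 1 - i₀ = i - i₀ + 1 by ring,
      ZMod.val_add_one_of_ne_zero hne]
    push_cast
    simp
  refine ⟨(SimpleGraph.Coloring.mk (fun v => c v) fun {u v} huv => ?_ :
    (G.induce W').Coloring (ZMod 2))⟩
  obtain ⟨i, hi⟩ := hind _ huv (by
    simp [Finset.insert_subset_iff, hW'.subset u.2, hW'.subset v.2])
  replace hi : ({(u : Fin n), (v : Fin n)} : Finset (Fin n)) = {f i, f (i + 1)} := hi
  rcases Finset.pair_eq_pair_iff.mp hi with ⟨hu, hv⟩ | ⟨hu, hv⟩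
  · rw [hu, hv]; exact hc i (hv ▸ v.2)
  · rw [hu, hv]; exact (hc i (hu ▸ u.2)).symm

theorem isInducedOddCycle_of_minimal (hW : ¬ (G.induce W).Colorable 2)
    (hmin : ∀ W' ⊂ W, (G.induce W').Colorable 2) : IsInducedOddCycle G W := by
  obtain ⟨s, f, hf⟩ := SimpleGraph.exists_isShortestOddClosedWalk_of_not_colorable_two hW
  have : NeZero s := ⟨hf.1.pos.ne'⟩
  have hs3 : 3 ≤ s := by
    obtain ⟨k, rfl⟩ := hf.1
    have := hf.2.1.ne_one
    omega
  have hU := isInducedOddCycle_image (G := G) hs3 hf.1 (Subtype.val_injective.comp hf.injective)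
    fun a b => hf.adj_iff
  have hUW : Finset.univ.image (Subtype.val ∘ f) ⊆ W := by
    simp [Finset.image_subset_iff]
  rcases hUW.eq_or_ssubset with heq | hssub
  · rwa [← heq]
  · exact absurd (hmin _ hssub) hU.not_colorable_two

theorem isInducedOddCycle_iff :
    IsInducedOddCycle G W ↔ ¬ (G.induce W).Colorable 2 ∧ ∀ W' ⊂ W, (G.induce W').Colorable 2 :=
  ⟨fun h => ⟨h.not_colorable_two, fun _ => h.colorable_two_of_ssubset⟩,
    fun h => isInducedOddCycle_of_minimal h.1 h.2⟩

end InducedOddCycle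

/-- Let `G` be a finite simple graph with edge ideal `I = I(G)`.  A
squarefree monomial `∏_{i ∈ W} x_i` is a minimal monomial generator of the second secant
power `I^{2}` if and only if the induced subgraph of `G` on `W` is an induced odd
cycle. -/
theorem secant_sq_gens_iff_induced_odd_cycle {n : ℕ} (K : Type*) [Field K] (G : GraphOn n)
    (W : Finset (Fin n)) :
    ((∏ i ∈ W, (X i : MvPolynomial (Fin n) K)) ∈ secantPower (edgeIdeal K G) 2 ∧
      ∀ W' ⊂ W, (∏ i ∈ W', (X i : MvPolynomial (Fin n) K)) ∉ secantPower (edgeIdeal K G) 2)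
    ↔ IsInducedOddCycle G W := by
  simp only [prod_X_mem_secantPower_iff, not_not, isInducedOddCycle_iff]
end
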